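/- Let A, A', B, B' be cochain complexes over an additive category, let f : A ⟶ B be a chain map, let φ : A ⟶ A' and ψ : B ⟶ B' be homotopy equivalences, and let φ⁻¹ : A' ⟶ A be a homotopy inverse of φ. Then the mapping cones Cone(f) and Cone(ψ ∘ f ∘ φ⁻¹) are homotopy equivalent. -/

import Mathlib

/-!
The square formed by `f`, `φinv ≫ f ≫ ψ` and the homotopy equivalences `φ`, `ψ` commutes up to
homotopy, so in the homotopy category it is a commutative square of isomorphisms. Mapping cone
triangles are distinguished there, and an isomorphism between the first two vertices of
distinguished triangles compatible with the first morphisms extends to an isomorphism of triangles;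
its third component is the required homotopy equivalence of cones.

The homotopy category is only known to be triangulated when the additive category has a zero
object. In general one passes through the additive Yoneda embedding `C ⥤ (Cᵒᵖ ⥤ Ab)`, which
commutes with mapping cones and, being fully faithful, reflects homotopy equivalences.
-/

open CategoryTheory CategoryTheory.Limits CochainComplex

instance CategoryTheory.preadditiveYoneda_additive {C : Type*} [Category C] [Preadditive C] :
    (preadditiveYoneda (C := C)).Additive where
  map_add {_ _ _ _} := by ext; exact Preadditive.comp_add _ _ _ _ _ _

noncomputable def HomotopyEquiv.ofMapHomologicalComplex {V W ι : Type*} [Category V] [Category W]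
    [Preadditive V] [Preadditive W] {c : ComplexShape ι}
    (F : V ⥤ W) [F.Additive] [F.Full] [F.Faithful] {X Y : HomologicalComplex V c}
    (e : HomotopyEquiv ((F.mapHomologicalComplex c).obj X) ((F.mapHomologicalComplex c).obj Y)) :
    HomotopyEquiv X Y :=
  HomotopyCategory.homotopyEquivOfIso <|
    (Functor.FullyFaithful.ofFullyFaithful (F.mapHomotopyCategory c)).preimageIso <|
      (F.mapHomotopyCategoryFactors c).app X ≪≫ HomotopyCategory.isoOfHomotopyEquiv e ≪≫
        ((F.mapHomotopyCategoryFactors c).app Y).symm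

noncomputable def HomotopyCategory.mappingConeIsoOfHomotopyCommSq {D : Type*} [Category D]
    [Preadditive D] [HasZeroObject D] [HasBinaryBiproducts D]
    {A A' B B' : CochainComplex D ℤ} (f : A ⟶ B) (g : A' ⟶ B')
    (eA : HomotopyEquiv A A') (eB : HomotopyEquiv B B')
    (H : Homotopy (f ≫ eB.hom) (eA.hom ≫ g)) :
    (quotient D _).obj (mappingCone f) ≅ (quotient D _).obj (mappingCone g) :=
  have comm : (quotient _ _).map f ≫ (isoOfHomotopyEquiv eB).hom =
      (isoOfHomotopyEquiv eA).hom ≫ (quotient _ _).map g := by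
    simp only [isoOfHomotopyEquiv_hom, ← Functor.map_comp]
    exact eq_of_homotopy _ _ H
  Pretriangulated.Triangle.π₃.mapIso <|
    Pretriangulated.isoTriangleOfIso₁₂ _ _ (mappingCone_triangleh_distinguished f)
      (mappingCone_triangleh_distinguished g) _ _ comm

noncomputable def CochainComplex.mappingCone.homotopyEquivOfHomotopyCommSq {C : Type*}
    [Category C] [Preadditive C] [HasBinaryBiproducts C]
    {A A' B B' : CochainComplex C ℤ} (f : A ⟶ B) (g : A' ⟶ B')
    (eA : HomotopyEquiv A A') (eB : HomotopyEquiv B B')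
    (H : Homotopy (f ≫ eB.hom) (eA.hom ≫ g)) :
    HomotopyEquiv (mappingCone f) (mappingCone g) :=
  let F := preadditiveYoneda (C := C)
  let Φ := F.mapHomologicalComplex (ComplexShape.up ℤ)
  let HΦ : Homotopy (Φ.map f ≫ (F.mapHomotopyEquiv eB).hom)
      ((F.mapHomotopyEquiv eA).hom ≫ Φ.map g) :=
    (Homotopy.ofEq (Φ.map_comp f eB.hom).symm).trans
      ((F.mapHomotopy H).trans (Homotopy.ofEq (Φ.map_comp eA.hom g)))
  HomotopyEquiv.ofMapHomologicalComplex F <|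
    (HomotopyEquiv.ofIso (mapHomologicalComplexIso f F)).trans <|
      (HomotopyCategory.homotopyEquivOfIso
        (HomotopyCategory.mappingConeIsoOfHomotopyCommSq _ _ _ _ HΦ)).trans
        (HomotopyEquiv.ofIso (mapHomologicalComplexIso g F).symm)

/-- If `φ : A ⟶ A'` and `ψ : B ⟶ B'` are homotopy equivalences of cochain complexes, with
`φinv` a homotopy inverse of `φ`, then for any chain map `f : A ⟶ B` the mapping cones of
`f` and of `ψ ∘ f ∘ φ⁻¹` are homotopy equivalent. -/
theorem mappingCone_homotopyEquiv_of_homotopyEquiv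
    {C : Type*} [Category C] [Preadditive C] [HasBinaryBiproducts C]
    {A A' B B' : CochainComplex C ℤ} (f : A ⟶ B)
    (φ : A ⟶ A') (φinv : A' ⟶ A) (ψ : B ⟶ B') (ψinv : B' ⟶ B)
    (hφ₁ : Homotopy (φ ≫ φinv) (𝟙 A)) (hφ₂ : Homotopy (φinv ≫ φ) (𝟙 A'))
    (hψ₁ : Homotopy (ψ ≫ ψinv) (𝟙 B)) (hψ₂ : Homotopy (ψinv ≫ ψ) (𝟙 B')) :
    Nonempty (HomotopyEquiv (mappingCone f) (mappingCone (φinv ≫ f ≫ ψ))) := by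
  have square : Homotopy (f ≫ ψ) (φ ≫ φinv ≫ f ≫ ψ) :=
    (Homotopy.ofEq (Category.id_comp _).symm).trans
      ((hφ₁.symm.compRight (f ≫ ψ)).trans (Homotopy.ofEq (Category.assoc _ _ _)))
  exact ⟨mappingCone.homotopyEquivOfHomotopyCommSq f _ ⟨φ, φinv, hφ₁, hφ₂⟩ ⟨ψ, ψinv, hψ₁, hψ₂⟩
    square⟩
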